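/- arXiv:2508.17698 — 2 statements merged into one kernel-verified Lean document; each statement's English description precedes it below -/
import Mathlib

section
/- For all z, w ∈ 𝔻, ρ(z,w)² = ⟨φ_{Φ(w)}(Φ(z)), φ_{Φ(w)}(Φ(z))⟩_K. -/
open Complex ComplexConjugate ComplexOrder

/-- The indefinite inner product `⟨z,w⟩_K = z₁·conj(w₁) − z₂·conj(w₂)` on ℂ². -/
noncomputable def Kip (z w : Fin 2 → ℂ) : ℂ :=
  z 0 * conj (w 0) - z 1 * conj (w 1)

/-- The unit ball `Ω = {z : |z₁|² − |z₂|² < 1}` of the Kreĭn space `(ℂ², ⟨·,·⟩_K)`. -/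
def Omega : Set (Fin 2 → ℂ) :=
  {z | ‖z 0‖ ^ 2 - ‖z 1‖ ^ 2 < 1}

/-- The birational involution `φ_a(z) = (a − P_a z − s_a Q_a z)/(1 − ⟨z,a⟩_K)`,
with the convention `φ_0(z) = −z`.  Here `P_a z = (⟨z,a⟩_K/⟨a,a⟩_K)a`,
`Q_a = I − P_a` and `s_a = (1 − ⟨a,a⟩_K)^{1/2}` (note `⟨a,a⟩_K` is real). -/
noncomputable def phiK (a z : Fin 2 → ℂ) : Fin 2 → ℂ :=
  if a = 0 then -z
  else
    (1 - Kip z a)⁻¹ •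
      (a - (Kip z a / Kip a a) • a
        - (Real.sqrt (1 - (Kip a a).re) : ℂ) • (z - (Kip z a / Kip a a) • a))

/-- The distance on the unit disk induced by the Bergman kernel. -/
noncomputable def rho (l m : ℂ) : ℝ :=
  Real.sqrt (2 * ‖(l - m) / (1 - conj m * l)‖ ^ 2
    - ‖(l - m) / (1 - conj m * l)‖ ^ 4)

/-- The nonlinear embedding `Φ(λ) = (√2·λ, λ²)`. -/
noncomputable def PhiMap (l : ℂ) : Fin 2 → ℂ := ![(Real.sqrt 2 : ℂ) * l, l ^ 2]

/-! The map `φ_a` transports the kernel `1 - ⟨·,·⟩_K`: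
`1 - ⟨φ_a z, φ_a w⟩_K = (1 - ⟨a,a⟩_K)(1 - ⟨z,w⟩_K) / ((1 - ⟨z,a⟩_K)(1 - ⟨a,w⟩_K))`,
a rational identity once `s_a² = 1 - ⟨a,a⟩_K` is used.
Since `1 - ⟨Φ z, Φ w⟩_K = (1 - w̄z)²`, for `a = Φ w` this gives
`⟨φ_a (Φ z), φ_a (Φ z)⟩_K = 1 - (1 - p²)²` by the classical identity
`1 - p² = (1 - |z|²)(1 - |w|²) / |1 - w̄z|²`, and `1 - (1 - p²)² = 2p² - p⁴ = ρ(z,w)²`. -/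

section Kip

variable (x y v : Fin 2 → ℂ) (c : ℂ)

lemma Kip_sub_left : Kip (x - y) v = Kip x v - Kip y v := by
  simp only [Kip, Pi.sub_apply]; ring

lemma Kip_sub_right : Kip x (y - v) = Kip x y - Kip x v := by
  simp only [Kip, Pi.sub_apply, map_sub]; ring

lemma Kip_smul_left : Kip (c • x) y = c * Kip x y := by
  simp only [Kip, Pi.smul_apply, smul_eq_mul]; ring

lemma Kip_smul_right : Kip x (c • y) = conj c * Kip x y := by
  simp only [Kip, Pi.smul_apply, smul_eq_mul, map_mul]; ring

lemma Kip_neg_neg : Kip (-x) (-y) = Kip x y := by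
  simp only [Kip, Pi.neg_apply, map_neg]; ring

lemma conj_Kip : conj (Kip x y) = Kip y x := by
  simp only [Kip, map_sub, map_mul, conj_conj]; ring

lemma ofReal_re_Kip_self : ((Kip x x).re : ℂ) = Kip x x :=
  conj_eq_iff_re.mp (conj_Kip x x)

end Kip

lemma one_sub_Kip_phiK (a z w : Fin 2 → ℂ) (ha : Kip a a ≠ 0) (ha₁ : (Kip a a).re ≤ 1)
    (hz : 1 - Kip z a ≠ 0) (hw : 1 - Kip w a ≠ 0) :
    1 - Kip (phiK a z) (phiK a w)
      = (1 - Kip a a) * (1 - Kip z w) / ((1 - Kip z a) * (1 - Kip a w)) := by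
  have ha₀ : a ≠ 0 := by rintro rfl; simp [Kip] at ha
  have hs : ((√(1 - (Kip a a).re) : ℝ) : ℂ) ^ 2 = 1 - Kip a a := by
    rw [← ofReal_pow, Real.sq_sqrt (by linarith), ofReal_sub, ofReal_one, ofReal_re_Kip_self]
  have hw' : 1 - Kip a w ≠ 0 := by
    rwa [← conj_Kip, ← map_one (starRingEnd ℂ), ← map_sub, map_ne_zero]
  simp only [phiK, if_neg ha₀, Kip_smul_left, Kip_smul_right, Kip_sub_left, Kip_sub_right,
    map_inv₀, map_sub, map_div₀, map_one, conj_Kip, conj_ofReal]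
  field_simp
  linear_combination (Kip a w * Kip z a - Kip a a * Kip z w) * hs

lemma one_sub_conj_mul_ne_zero {z w : ℂ} (hz : ‖z‖ < 1) (hw : ‖w‖ < 1) :
    1 - conj w * z ≠ 0 := by
  intro h
  have h₁ : ‖conj w * z‖ = 1 := by rw [← sub_eq_zero.mp h, norm_one]
  rw [norm_mul, norm_conj] at h₁
  nlinarith [norm_nonneg z, norm_nonneg w]

lemma one_sub_norm_sq_div_one_sub_conj_mul {z w : ℂ} (h : 1 - conj w * z ≠ 0) :
    1 - ‖(z - w) / (1 - conj w * z)‖ ^ 2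
      = (1 - ‖z‖ ^ 2) * (1 - ‖w‖ ^ 2) / ‖1 - conj w * z‖ ^ 2 := by
  have h' : ‖1 - conj w * z‖ ^ 2 ≠ 0 := by simpa using h
  rw [norm_div, div_pow, eq_div_iff h', sub_mul, div_mul_cancel₀ _ h']
  apply ofReal_injective
  push_cast
  simp only [← mul_conj', map_sub, map_mul, map_one, conj_conj]
  ring

lemma rho_sq {z w : ℂ} (hz : ‖z‖ < 1) (hw : ‖w‖ < 1) :
    rho z w ^ 2 = 1 - (1 - ‖(z - w) / (1 - conj w * z)‖ ^ 2) ^ 2 := by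
  have hz₁ : 0 ≤ 1 - ‖z‖ ^ 2 := by nlinarith [norm_nonneg z]
  have hw₁ : 0 ≤ 1 - ‖w‖ ^ 2 := by nlinarith [norm_nonneg w]
  have hp : ‖(z - w) / (1 - conj w * z)‖ ^ 2 ≤ 1 := by
    have h := one_sub_norm_sq_div_one_sub_conj_mul (one_sub_conj_mul_ne_zero hz hw)
    have := div_nonneg (mul_nonneg hz₁ hw₁) (sq_nonneg ‖1 - conj w * z‖)
    linarith
  rw [rho, Real.sq_sqrt (by nlinarith [sq_nonneg ‖(z - w) / (1 - conj w * z)‖])]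
  ring

lemma one_sub_Kip_PhiMap (z w : ℂ) : 1 - Kip (PhiMap z) (PhiMap w) = (1 - conj w * z) ^ 2 := by
  have h2 : ((√2 : ℝ) : ℂ) ^ 2 = 2 := by rw [← ofReal_pow]; simp
  simp only [Kip, PhiMap, Matrix.cons_val_zero, Matrix.cons_val_one, map_mul, map_pow, conj_ofReal]
  linear_combination (-(z * conj w)) * h2

lemma Kip_PhiMap_self (w : ℂ) :
    Kip (PhiMap w) (PhiMap w) = ((1 - (1 - ‖w‖ ^ 2) ^ 2 : ℝ) : ℂ) := by
  rw [← sub_sub_cancel 1 (Kip (PhiMap w) (PhiMap w)), one_sub_Kip_PhiMap, conj_mul']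
  push_cast; ring

lemma Kip_phiK_PhiMap_self {z w : ℂ} (hz : ‖z‖ < 1) (hw : ‖w‖ < 1) :
    Kip (phiK (PhiMap w) (PhiMap z)) (phiK (PhiMap w) (PhiMap z))
      = ((1 - ((1 - ‖z‖ ^ 2) * (1 - ‖w‖ ^ 2) / ‖1 - conj w * z‖ ^ 2) ^ 2 : ℝ) : ℂ) := by
  rcases eq_or_ne w 0 with rfl | hw₀
  · have hΦ : PhiMap 0 = 0 := by ext i; fin_cases i <;> simp [PhiMap]
    rw [hΦ, phiK, if_pos rfl, Kip_neg_neg, Kip_PhiMap_self]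
    simp
  have hKaa := Kip_PhiMap_self w
  have ha : Kip (PhiMap w) (PhiMap w) ≠ 0 := by
    have hw₂ : 0 < ‖w‖ ^ 2 := by positivity
    have hw₁ : ‖w‖ ^ 2 < 1 := by nlinarith [norm_nonneg w]
    rw [hKaa, ofReal_ne_zero]
    apply ne_of_gt
    nlinarith [mul_pos hw₂ (by linarith : (0 : ℝ) < 2 - ‖w‖ ^ 2)]
  have ha₁ : (Kip (PhiMap w) (PhiMap w)).re ≤ 1 := by
    rw [hKaa, ofReal_re]
    nlinarith [sq_nonneg (1 - ‖w‖ ^ 2)]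
  have hzw : 1 - Kip (PhiMap z) (PhiMap w) ≠ 0 := by
    rw [one_sub_Kip_PhiMap]
    exact pow_ne_zero 2 (one_sub_conj_mul_ne_zero hz hw)
  rw [← sub_sub_cancel 1 (Kip _ _), one_sub_Kip_phiK _ _ _ ha ha₁ hzw hzw]
  simp only [one_sub_Kip_PhiMap]
  push_cast
  simp only [← mul_conj', map_sub, map_mul, map_one, conj_conj]
  field_simp

/-- `ρ(z,w)² = ⟨φ_{Φ(w)}(Φ(z)), φ_{Φ(w)}(Φ(z))⟩_K`. -/
theorem rho_sq_eq_Kip_phiK (z w : ℂ)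
    (hz : ‖z‖ < 1) (hw : ‖w‖ < 1) :
    ((rho z w : ℂ)) ^ 2 = Kip (phiK (PhiMap w) (PhiMap z)) (phiK (PhiMap w) (PhiMap z)) := by
  rw [Kip_phiK_PhiMap_self hz hw, ← ofReal_pow, rho_sq hz hw,
    one_sub_norm_sq_div_one_sub_conj_mul (one_sub_conj_mul_ne_zero hz hw)]
end

section
/- Let λ₁ and λ₂ be two distinct points of 𝔻 and let ω₁, ω₂ ∈ 𝔻. The following are equivalent: (i) the matrix M_Φ(λ₁,λ₂;ω₁,ω₂) with entries (1−ω_i·conj(ω_j))²/(1−λ_i·conj(λ_j))² is positive semi-definite; (ii) the Pick matrix P(λ₁,λ₂;ω₁,ω₂) with entries (1−ω_i·conj(ω_j))/(1−λ_i·conj(λ_j)) is positive semi-definite; (iii) ρ(ω₁,ω₂) ≤ ρ(λ₁,λ₂). -/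
/-!
Both matrices are `2 × 2` Hermitian with positive diagonal, so each is positive semidefinite iff
`|m₀₁|² ≤ m₀₀ m₁₁`; as the entries of `M_Φ` are the squares of those of `P`, the two conditions
agree. By the identity `|1 - a b̄|² = (1 - |a|²)(1 - |b|²) + |a - b|²`, the condition for `P` says
`p(ω₁, ω₂) ≤ p(λ₁, λ₂)` for the pseudo-hyperbolic distance `p`, and `ρ = √(2p² - p⁴)` is an
increasing function of `p ∈ [0, 1]`.
-/

open Complex ComplexConjugate ComplexOrder

theorem Matrix.posSemidef_fin_two_iff_normSq_le {M : Matrix (Fin 2) (Fin 2) ℂ} {a c : ℝ}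
    (h00 : M 0 0 = a) (h10 : M 1 0 = conj (M 0 1)) (h11 : M 1 1 = c) (ha : 0 < a) :
    M.PosSemidef ↔ normSq (M 0 1) ≤ a * c := by
  set b := M 0 1 with hb
  have hherm : M.IsHermitian := by
    ext i j
    fin_cases i <;> fin_cases j <;> simp [Matrix.conjTranspose_apply, h00, h10, h11, ← hb]
  -- completing the square in the first coordinate
  have hquad (x : Fin 2 → ℂ) : star x ⬝ᵥ M.mulVec x
      = ((a⁻¹ * (normSq (a * x 0 + b * x 1) + (a * c - normSq b) * normSq (x 1)) : ℝ) : ℂ) := by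
    have ha' : (a : ℂ) ≠ 0 := by exact_mod_cast ha.ne'
    simp only [Matrix.mulVec, dotProduct, Fin.sum_univ_two, Pi.star_apply, RCLike.star_def,
      h00, h10, h11, ← hb]
    push_cast
    simp only [← mul_conj, map_add, map_mul, conj_ofReal]
    field_simp
    ring
  simp only [Matrix.posSemidef_iff_dotProduct_mulVec, hquad, zero_le_real, hherm, true_and]
  constructor
  · intro h
    have h0 := h ![-b, a]
    simp only [Matrix.cons_val_zero, Matrix.cons_val_one, mul_neg, mul_comm b, neg_add_cancel,
      map_zero, zero_add, normSq_ofReal] at h0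
    rw [show a⁻¹ * ((a * c - normSq b) * (a * a)) = a * (a * c - normSq b) by field_simp] at h0
    linarith [(mul_nonneg_iff_of_pos_left ha).mp h0]
  · intro h x
    have hd : 0 ≤ a * c - normSq b := by linarith
    exact mul_nonneg (inv_nonneg.mpr ha.le)
      (add_nonneg (normSq_nonneg _) (mul_nonneg hd (normSq_nonneg _)))

theorem one_sub_normSq_pos {z : ℂ} (hz : ‖z‖ < 1) : 0 < 1 - normSq z := by
  rw [normSq_eq_norm_sq, sub_pos]
  exact pow_lt_one₀ (norm_nonneg z) hz two_ne_zero

theorem normSq_one_sub_mul_conj (a b : ℂ) :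
    normSq (1 - a * conj b) = (1 - normSq a) * (1 - normSq b) + normSq (a - b) := by
  apply ofReal_injective
  push_cast
  simp only [← mul_conj, map_sub, map_one, map_mul, conj_conj]
  ring

theorem normSq_one_sub_mul_conj_pos {a b : ℂ} (ha : ‖a‖ < 1) (hb : ‖b‖ < 1) :
    0 < normSq (1 - a * conj b) := by
  rw [normSq_one_sub_mul_conj]
  exact add_pos_of_pos_of_nonneg (mul_pos (one_sub_normSq_pos ha) (one_sub_normSq_pos hb))
    (normSq_nonneg _)

theorem conj_one_sub_mul_conj (a b : ℂ) : conj (1 - a * conj b) = 1 - b * conj a := by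
  simp [mul_comm]

noncomputable def pseudoHyperbolic (a b : ℂ) : ℝ := ‖(a - b) / (1 - conj b * a)‖

theorem one_sub_pseudoHyperbolic_sq {a b : ℂ} (ha : ‖a‖ < 1) (hb : ‖b‖ < 1) :
    1 - pseudoHyperbolic a b ^ 2
      = (1 - normSq a) * (1 - normSq b) / normSq (1 - a * conj b) := by
  have hpos := normSq_one_sub_mul_conj_pos ha hb
  rw [pseudoHyperbolic, Complex.sq_norm, map_div₀, mul_comm (conj b), eq_div_iff hpos.ne',
    sub_mul, div_mul_cancel₀ _ hpos.ne', normSq_one_sub_mul_conj]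
  ring

theorem pseudoHyperbolic_sq_lt_one {a b : ℂ} (ha : ‖a‖ < 1) (hb : ‖b‖ < 1) :
    pseudoHyperbolic a b ^ 2 < 1 := by
  have h := one_sub_pseudoHyperbolic_sq ha hb
  have hpos : 0 < (1 - normSq a) * (1 - normSq b) / normSq (1 - a * conj b) :=
    div_pos (mul_pos (one_sub_normSq_pos ha) (one_sub_normSq_pos hb))
      (normSq_one_sub_mul_conj_pos ha hb)
  linarith

theorem rho_eq_sqrt (a b : ℂ) :
    rho a b = √(2 * pseudoHyperbolic a b ^ 2 - (pseudoHyperbolic a b ^ 2) ^ 2) := by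
  rw [rho, pseudoHyperbolic, ← pow_mul]

noncomputable def pickMatrix {n : Type*} (l w : n → ℂ) : Matrix n n ℂ :=
  Matrix.of fun i j => (1 - w i * conj (w j)) / (1 - l i * conj (l j))

/-- `M_Φ(λ; ω)`, the Pick matrix of the Bergman kernel `(1 - z w̄)⁻²`. -/
noncomputable def bergmanPickMatrix {n : Type*} (l w : n → ℂ) : Matrix n n ℂ :=
  Matrix.of fun i j => (1 - w i * conj (w j)) ^ 2 / (1 - l i * conj (l j)) ^ 2

section

variable {l1 l2 w1 w2 : ℂ}

theorem rho_le_rho_iff (hl1 : ‖l1‖ < 1) (hl2 : ‖l2‖ < 1) (hw1 : ‖w1‖ < 1) (hw2 : ‖w2‖ < 1) :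
    rho w1 w2 ≤ rho l1 l2 ↔ pseudoHyperbolic w1 w2 ^ 2 ≤ pseudoHyperbolic l1 l2 ^ 2 := by
  have hx1 := pseudoHyperbolic_sq_lt_one hw1 hw2
  have hy1 := pseudoHyperbolic_sq_lt_one hl1 hl2
  set x := pseudoHyperbolic w1 w2 ^ 2
  set y := pseudoHyperbolic l1 l2 ^ 2
  have hx0 : 0 ≤ x := sq_nonneg _
  have hy0 : 0 ≤ y := sq_nonneg _
  -- `t ↦ 2t - t²` is increasing on `[0, 1]`
  rw [rho_eq_sqrt, rho_eq_sqrt, Real.sqrt_le_sqrt_iff (by nlinarith)]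
  constructor
  · intro h
    by_contra! hlt
    nlinarith [mul_pos (sub_pos.mpr hlt) (by linarith : (0 : ℝ) < 2 - x - y)]
  · intro h
    nlinarith [mul_nonneg (sub_nonneg.mpr h) (by linarith : (0 : ℝ) ≤ 2 - x - y)]

theorem normSq_div_le_iff_pseudoHyperbolic_sq_le (hl1 : ‖l1‖ < 1) (hl2 : ‖l2‖ < 1)
    (hw1 : ‖w1‖ < 1) (hw2 : ‖w2‖ < 1) :
    normSq ((1 - w1 * conj w2) / (1 - l1 * conj l2))
        ≤ (1 - normSq w1) / (1 - normSq l1) * ((1 - normSq w2) / (1 - normSq l2))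
      ↔ pseudoHyperbolic w1 w2 ^ 2 ≤ pseudoHyperbolic l1 l2 ^ 2 := by
  rw [← sub_le_sub_iff_left 1 (b := pseudoHyperbolic l1 l2 ^ 2),
    one_sub_pseudoHyperbolic_sq hl1 hl2, one_sub_pseudoHyperbolic_sq hw1 hw2,
    map_div₀, div_mul_div_comm,
    div_le_div_iff₀ (normSq_one_sub_mul_conj_pos hl1 hl2)
      (mul_pos (one_sub_normSq_pos hl1) (one_sub_normSq_pos hl2)),
    div_le_div_iff₀ (normSq_one_sub_mul_conj_pos hl1 hl2) (normSq_one_sub_mul_conj_pos hw1 hw2),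
    mul_comm (normSq _)]

theorem pickMatrix_posSemidef_iff (hl1 : ‖l1‖ < 1) (hw1 : ‖w1‖ < 1) :
    (pickMatrix ![l1, l2] ![w1, w2]).PosSemidef
      ↔ normSq ((1 - w1 * conj w2) / (1 - l1 * conj l2))
        ≤ (1 - normSq w1) / (1 - normSq l1) * ((1 - normSq w2) / (1 - normSq l2)) :=
  Matrix.posSemidef_fin_two_iff_normSq_le (by simp [pickMatrix, mul_conj])
    (by simp [pickMatrix, conj_one_sub_mul_conj]) (by simp [pickMatrix, mul_conj])
    (div_pos (one_sub_normSq_pos hw1) (one_sub_normSq_pos hl1))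

theorem bergmanPickMatrix_posSemidef_iff (hl1 : ‖l1‖ < 1) (hl2 : ‖l2‖ < 1) (hw1 : ‖w1‖ < 1)
    (hw2 : ‖w2‖ < 1) :
    (bergmanPickMatrix ![l1, l2] ![w1, w2]).PosSemidef
      ↔ normSq ((1 - w1 * conj w2) / (1 - l1 * conj l2))
        ≤ (1 - normSq w1) / (1 - normSq l1) * ((1 - normSq w2) / (1 - normSq l2)) := by
  have ha := div_pos (one_sub_normSq_pos hw1) (one_sub_normSq_pos hl1)
  have hc := div_pos (one_sub_normSq_pos hw2) (one_sub_normSq_pos hl2)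
  refine (Matrix.posSemidef_fin_two_iff_normSq_le
    (a := ((1 - normSq w1) / (1 - normSq l1)) ^ 2) (c := ((1 - normSq w2) / (1 - normSq l2)) ^ 2)
    (by simp [bergmanPickMatrix, mul_conj, div_pow])
    (by simp [bergmanPickMatrix, conj_one_sub_mul_conj])
    (by simp [bergmanPickMatrix, mul_conj, div_pow]) (pow_pos ha 2)).trans ?_
  rw [← mul_pow, bergmanPickMatrix]
  simp only [Matrix.of_apply, Matrix.cons_val_zero, Matrix.cons_val_one, ← div_pow, map_pow]
  exact pow_le_pow_iff_left₀ (normSq_nonneg _) (mul_pos ha hc).le two_ne_zero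

end

theorem MPhi_pick_rho_equiv_general (l1 l2 w1 w2 : ℂ)
    (hl1 : ‖l1‖ < 1) (hl2 : ‖l2‖ < 1)
    (hw1 : ‖w1‖ < 1) (hw2 : ‖w2‖ < 1) :
    ((Matrix.of fun i j : Fin 2 =>
        (1 - ![w1, w2] i * conj (![w1, w2] j)) ^ 2 /
          (1 - ![l1, l2] i * conj (![l1, l2] j)) ^ 2).PosSemidef
      ↔ (Matrix.of fun i j : Fin 2 =>
          (1 - ![w1, w2] i * conj (![w1, w2] j)) /
            (1 - ![l1, l2] i * conj (![l1, l2] j))).PosSemidef)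
    ∧ ((Matrix.of fun i j : Fin 2 =>
          (1 - ![w1, w2] i * conj (![w1, w2] j)) /
            (1 - ![l1, l2] i * conj (![l1, l2] j))).PosSemidef
      ↔ rho w1 w2 ≤ rho l1 l2) := by
  have hP := pickMatrix_posSemidef_iff (l2 := l2) (w2 := w2) hl1 hw1
  exact ⟨(bergmanPickMatrix_posSemidef_iff hl1 hl2 hw1 hw2).trans hP.symm,
    hP.trans <| (normSq_div_le_iff_pseudoHyperbolic_sq_le hl1 hl2 hw1 hw2).trans
      (rho_le_rho_iff hl1 hl2 hw1 hw2).symm⟩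

/-- Equivalence of: positivity of `M_Φ(λ₁,λ₂;ω₁,ω₂)`, positivity of the Pick
matrix `P(λ₁,λ₂;ω₁,ω₂)`, and the distance inequality `ρ(ω₁,ω₂) ≤ ρ(λ₁,λ₂)`. -/
theorem MPhi_pick_rho_equiv (l1 l2 w1 w2 : ℂ)
    (hl1 : ‖l1‖ < 1) (hl2 : ‖l2‖ < 1) (hne : l1 ≠ l2)
    (hw1 : ‖w1‖ < 1) (hw2 : ‖w2‖ < 1) :
    ((Matrix.of fun i j : Fin 2 =>
        (1 - ![w1, w2] i * conj (![w1, w2] j)) ^ 2 /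
          (1 - ![l1, l2] i * conj (![l1, l2] j)) ^ 2).PosSemidef
      ↔ (Matrix.of fun i j : Fin 2 =>
          (1 - ![w1, w2] i * conj (![w1, w2] j)) /
            (1 - ![l1, l2] i * conj (![l1, l2] j))).PosSemidef)
    ∧ ((Matrix.of fun i j : Fin 2 =>
          (1 - ![w1, w2] i * conj (![w1, w2] j)) /
            (1 - ![l1, l2] i * conj (![l1, l2] j))).PosSemidef
      ↔ rho w1 w2 ≤ rho l1 l2) :=
  MPhi_pick_rho_equiv_general l1 l2 w1 w2 hl1 hl2 hw1 hw2
end
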